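/- arXiv:1910.08464 — 6 statements merged into one kernel-verified Lean document; each statement's English description precedes it below -/
import Mathlib

section
/- Let N = C ⋊ ⟨t⟩ be a semidirect product of a finite group C by an infinite cyclic group generated by t, and let m be the order of the automorphism of C given by conjugation by t. Then the set of (2m|C|)-th powers {n^(2m|C|) : n ∈ N} is exactly the cyclic subgroup generated by t^(2m|C|). -/
/-! Every `φ z` has order dividing `m`, so for `x = (c, z)` the power `x ^ m = (c', z ^ m)` has a
second coordinate acting trivially on `C`. Its two coordinates then commute, and raising `x ^ m` to
a multiple of `|C|` kills `c'`: `x ^ (2m|C|) = (t ^ a) ^ (2m|C|)` where `z = t ^ a`. -/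

lemma MonoidHom.apply_pow_orderOf_apply_ofAdd_one {G : Type*} [Group G]
    (f : Multiplicative ℤ →* G) (z : Multiplicative ℤ) :
    f z ^ orderOf (f (Multiplicative.ofAdd 1)) = 1 := by
  rw [f.apply_mint, ← zpow_natCast, zpow_comm, zpow_natCast, pow_orderOf_eq_one, one_zpow]

namespace SemidirectProduct

variable {N G : Type*} [Group N] [Group G] {φ : G →* MulAut N}

lemma right_pow (x : N ⋊[φ] G) (k : ℕ) : (x ^ k).right = x.right ^ k :=
  map_pow rightHom x k

lemma mk_pow_of_map_eq_one {n : N} {g : G} (hg : φ g = 1) (k : ℕ) :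
    (⟨n, g⟩ : N ⋊[φ] G) ^ k = ⟨n ^ k, g ^ k⟩ := by
  induction k with
  | zero => ext <;> simp
  | succ k ih =>
    rw [pow_succ, ih, mul_def, map_pow, hg, one_pow, MulAut.one_apply, ← pow_succ, ← pow_succ]

lemma pow_mul_eq_inr {m k : ℕ} (x : N ⋊[φ] G) (hm : φ x.right ^ m = 1)
    (hk : ∀ n : N, n ^ k = 1) : x ^ (m * k) = inr (x.right ^ (m * k)) := by
  have hxm : φ (x ^ m).right = 1 := by rw [right_pow, map_pow, hm]
  rw [pow_mul, ← inl_left_mul_inr_right (x ^ m), ← mk_eq_inl_mul_inr, mk_pow_of_map_eq_one hxm,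
    hk, right_pow, ← pow_mul]
  rfl

end SemidirectProduct

/-- Let `N = C ⋊ ⟨t⟩` with `C` finite and `t` generating an infinite cyclic group, and let
`m` be the order of the conjugation automorphism `ad(t)|_C`.  Then the set of
`(2·m·|C|)`-th powers of `N` is exactly the cyclic subgroup generated by `t ^ (2·m·|C|)`. -/
theorem stmt_1 (C : Type*) [Group C] [Finite C]
    (φ : Multiplicative ℤ →* MulAut C) :
    let t : C ⋊[φ] Multiplicative ℤ := ⟨1, Multiplicative.ofAdd (1 : ℤ)⟩
    let m : ℕ := orderOf (φ (Multiplicative.ofAdd (1 : ℤ)))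
    {x : C ⋊[φ] Multiplicative ℤ |
        ∃ n : C ⋊[φ] Multiplicative ℤ, n ^ (2 * m * Nat.card C) = x}
      = (Subgroup.zpowers (t ^ (2 * m * Nat.card C)) : Set (C ⋊[φ] Multiplicative ℤ)) := by
  intro t m
  have inr_eq_zpow (z : Multiplicative ℤ) : SemidirectProduct.inr (φ := φ) z = t ^ z.toAdd :=
    MonoidHom.apply_mint _ SemidirectProduct.inr z
  have hK : 2 * m * Nat.card C = m * (2 * Nat.card C) := by ring
  ext x
  simp only [Set.mem_ofPred_eq, SetLike.mem_coe, Subgroup.mem_zpowers_iff, hK]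
  constructor
  · rintro ⟨n, rfl⟩
    have hk (c : C) : c ^ (2 * Nat.card C) = 1 := by rw [pow_mul', pow_card_eq_one', one_pow]
    refine ⟨n.right.toAdd, ?_⟩
    rw [SemidirectProduct.pow_mul_eq_inr n (φ.apply_pow_orderOf_apply_ofAdd_one _) hk, map_pow,
      inr_eq_zpow, ← zpow_natCast, ← zpow_natCast, zpow_comm]
  · rintro ⟨a, rfl⟩
    exact ⟨t ^ a, by rw [← zpow_natCast, ← zpow_natCast, zpow_comm]⟩
end

section
/- Let N = C ⋊ ⟨t⟩ with C finite and t of infinite order, and let m be the order of the conjugation automorphism ad(t)|_C in Aut(C). Then the set D = {n^(2m|C|) : n ∈ N} is a subgroup of N which is central in N and has finite index in N. -/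
open SemidirectProduct Multiplicative

private theorem stmt2_block_pow {C : Type*} [Group C] (f : ℕ → C) (m : ℕ)
    (hper : ∀ i, f (m + i) = f i) (j : ℕ) :
    ((List.range (m * j)).map f).prod = (((List.range m).map f).prod) ^ j := by
  have hkey : ∀ a i : ℕ, f (m * a + i) = f i := by
    intro a
    induction a with
    | zero => simp
    | succ a iha =>
      intro i
      have h : m * (a + 1) + i = m + (m * a + i) := by ring
      rw [h, hper, iha]
  induction j with
  | zero => simp
  | succ j ih =>
    have h : m * (j + 1) = m * j + m := by ring
    rw [h, List.range_add, List.map_append, List.prod_append, ih, List.map_map, pow_succ]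
    congr 2
    apply List.map_congr_left
    intro i _
    exact hkey j i

private theorem stmt2_pow_mk {C : Type*} [Group C] (φ : Multiplicative ℤ →* MulAut C)
    (c : C) (z : Multiplicative ℤ) (j : ℕ) :
    (⟨c, z⟩ : C ⋊[φ] Multiplicative ℤ) ^ j =
      ⟨((List.range j).map fun i => φ (z ^ i) c).prod, z ^ j⟩ := by
  induction j with
  | zero => ext <;> simp
  | succ j ih =>
    rw [pow_succ, ih]
    ext
    · rw [mul_left]
      simp only [List.range_succ, List.map_append, List.prod_append,
        List.map_cons, List.map_nil, List.prod_cons, List.prod_nil, mul_one, map_pow]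
    · rw [mul_right]
      rw [pow_succ]

/-- Let `N = C ⋊ ⟨t⟩` with `C` finite and `t` generating an infinite cyclic group, and let
`m` be the order of the conjugation automorphism `ad(t)|_C` in `Aut(C)`.  Then the set
`D = {n ^ (2·m·|C|) : n ∈ N}` is a subgroup of `N` which is central and of finite index. -/
theorem stmt_2 (C : Type*) [Group C] [Finite C]
    (φ : Multiplicative ℤ →* MulAut C) :
    let m : ℕ := orderOf (φ (Multiplicative.ofAdd (1 : ℤ)))
    ∃ D : Subgroup (C ⋊[φ] Multiplicative ℤ),
      (D : Set (C ⋊[φ] Multiplicative ℤ)) =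
        {x : C ⋊[φ] Multiplicative ℤ |
          ∃ n : C ⋊[φ] Multiplicative ℤ, n ^ (2 * m * Nat.card C) = x} ∧
      D ≤ Subgroup.center (C ⋊[φ] Multiplicative ℤ) ∧
      D.FiniteIndex := by
  intro m
  set N := C ⋊[φ] Multiplicative ℤ with hN
  set u : MulAut C := φ (ofAdd 1) with hu0
  set k : ℕ := 2 * m * Nat.card C with hk
  haveI : Finite (MulAut C) :=
    Finite.of_injective (fun f : MulAut C => (f : C → C)) DFunLike.coe_injective
  have hm_pos : 0 < m := orderOf_pos u
  have hk_pos : 0 < k := by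
    have := Nat.card_pos (α := C)
    positivity
  haveI : NeZero k := ⟨hk_pos.ne'⟩
  -- every automorphism φ z is a power of u
  have hu : ∀ z : Multiplicative ℤ, φ z = u ^ (toAdd z) := by
    intro z
    rw [hu0, ← map_zpow]
    congr 1
    simp [← ofAdd_zsmul]
  have hum : u ^ m = 1 := pow_orderOf_eq_one u
  have hm1 : ∀ z : Multiplicative ℤ, φ (z ^ m) = 1 := by
    intro z
    rw [map_pow, hu, ← zpow_natCast, ← zpow_mul, mul_comm, zpow_mul, zpow_natCast, hum, one_zpow]
  -- the key power computation
  have hpow : ∀ (c : C) (z : Multiplicative ℤ), (⟨c, z⟩ : N) ^ k = inr (z ^ k) := by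
    intro c z
    rw [stmt2_pow_mk]
    have hper : ∀ i, (fun i => φ (z ^ i) c) (m + i) = (fun i => φ (z ^ i) c) i := by
      intro i
      simp only [pow_add, map_mul, hm1 z, one_mul]
    have h2 : k = m * (2 * Nat.card C) := by rw [hk]; ring
    have hprod : ((List.range k).map fun i => φ (z ^ i) c).prod = 1 := by
      rw [h2, stmt2_block_pow _ m hper, mul_comm 2 (Nat.card C), pow_mul, pow_card_eq_one',
        one_pow]
    rw [hprod]
    rfl
  -- every z^k is a power of ofAdd k
  have hz : ∀ z : Multiplicative ℤ, z ^ k = (ofAdd (k : ℤ)) ^ (toAdd z) := by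
    intro z
    have hzz : z = ofAdd (toAdd z) := (ofAdd_toAdd z).symm
    conv_lhs => rw [hzz]
    rw [← ofAdd_nsmul, ← ofAdd_zsmul]
    congr 1
    simp [mul_comm]
  refine ⟨Subgroup.zpowers (inr (ofAdd (k : ℤ)) : N), ?_, ?_, ?_⟩
  · ext x
    simp only [SetLike.mem_coe, Subgroup.mem_zpowers_iff, Set.mem_setOf_eq]
    constructor
    · rintro ⟨a, rfl⟩
      refine ⟨⟨1, ofAdd a⟩, ?_⟩
      rw [hpow, hz, map_zpow inr]
      simp
    · rintro ⟨n, rfl⟩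
      obtain ⟨c, z⟩ := n
      exact ⟨toAdd z, by rw [hpow, hz, map_zpow inr]⟩
  · -- centrality
    intro x hx
    obtain ⟨a, rfl⟩ := Subgroup.mem_zpowers_iff.mp hx
    rw [Subgroup.mem_center_iff]
    intro g
    obtain ⟨c, z⟩ := g
    rw [← map_zpow inr]
    have hφ1 : φ ((ofAdd (k : ℤ)) ^ a) = 1 := by
      have hok : φ (ofAdd (k : ℤ)) = 1 := by
        have : (ofAdd (k : ℤ)) = (ofAdd (1 : ℤ)) ^ k := by
          rw [← ofAdd_nsmul]; simp
        rw [this, map_pow, ← hu0, hk, mul_comm 2 m, mul_assoc, pow_mul, hum, one_pow]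
      rw [map_zpow, hok, one_zpow]
    ext
    · simp [mul_left, hφ1, -map_zpow]
    · simp [mul_right, mul_comm, -map_zpow]
  · -- finite index
    set D := Subgroup.zpowers (inr (ofAdd (k : ℤ)) : N) with hD
    have hsurj : Function.Surjective
        (fun p : C × ZMod k => ((⟨p.1, ofAdd (p.2.val : ℤ)⟩ : N) : N ⧸ D)) := by
      intro q
      obtain ⟨n, rfl⟩ := QuotientGroup.mk_surjective q
      obtain ⟨c, z⟩ := n
      refine ⟨(c, ((toAdd z : ℤ) : ZMod k)), ?_⟩
      rw [QuotientGroup.eq]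
      have hdvd : (k : ℤ) ∣ (toAdd z - (((toAdd z : ℤ) : ZMod k).val : ℤ)) := by
        rw [← ZMod.intCast_zmod_eq_zero_iff_dvd]
        push_cast [ZMod.intCast_cast, ZMod.natCast_val, ZMod.cast_id]
        ring
      obtain ⟨q', hq'⟩ := hdvd
      refine ⟨q', ?_⟩
      dsimp only
      rw [← map_zpow inr]
      have hinv : (⟨c, ofAdd (((toAdd z : ℤ) : ZMod k).val : ℤ)⟩ : N)⁻¹ * ⟨c, z⟩ =
          inr ((ofAdd (((toAdd z : ℤ) : ZMod k).val : ℤ))⁻¹ * z) := by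
        ext
        · rw [mul_left, inv_left]
          simp [left_inr]
        · rw [mul_right, inv_right]
          simp [right_inr]
      rw [hinv]
      congr 1
      have h1 : (ofAdd (((toAdd z : ℤ) : ZMod k).val : ℤ))⁻¹ * z =
          ofAdd (-(((toAdd z : ℤ) : ZMod k).val : ℤ) + toAdd z) := by
        rw [ofAdd_add, ofAdd_neg, ofAdd_toAdd]
      rw [h1, ← ofAdd_zsmul]
      congr 1
      rw [smul_eq_mul]
      linear_combination -hq'
    haveI : Finite (N ⧸ D) := Finite.of_surjective _ hsurj
    exact Subgroup.finiteIndex_of_finite_quotient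
end

section
/- The groups N = ⟨a, t | a^25 = 1, t a t⁻¹ = a^6⟩ and N' = ⟨a', t' | a'^25 = 1, t' a' t'⁻¹ = a'^11⟩ are not isomorphic. -/
/-- The automorphism of `Multiplicative (ZMod 25)` given by multiplication by the unit `u`. -/
def mulBy25 (u : (ZMod 25)ˣ) : MulAut (Multiplicative (ZMod 25)) :=
  AddEquiv.toMultiplicative (AddAut.mulLeft u)

/-- The action of `ℤ` on `ℤ/25ℤ` in which the generator acts by multiplication by `u`. -/
def act25 (u : (ZMod 25)ˣ) : Multiplicative ℤ →* MulAut (Multiplicative (ZMod 25)) :=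
  zpowersHom (MulAut (Multiplicative (ZMod 25))) (mulBy25 u)

lemma mulBy25_mul (u v : (ZMod 25)ˣ) : mulBy25 (u * v) = mulBy25 u * mulBy25 v := by
  ext x
  show Multiplicative.ofAdd (((u*v : (ZMod 25)ˣ) : ZMod 25) * x.toAdd) = _
  simp [mulBy25, mul_assoc]
  rfl

def mulBy25Hom : (ZMod 25)ˣ →* MulAut (Multiplicative (ZMod 25)) :=
  MonoidHom.mk' mulBy25 mulBy25_mul

lemma act25_apply (u : (ZMod 25)ˣ) (g : Multiplicative ℤ) (x : Multiplicative (ZMod 25)) :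
    act25 u g x = Multiplicative.ofAdd (((u ^ g.toAdd : (ZMod 25)ˣ) : ZMod 25) * x.toAdd) := by
  show (mulBy25Hom u ^ g.toAdd) x = _
  rw [← map_zpow mulBy25Hom]
  rfl

open SemidirectProduct Multiplicative

lemma rightHom_eq_one_of_finOrder {u : (ZMod 25)ˣ}
    {g : Multiplicative (ZMod 25) ⋊[act25 u] Multiplicative ℤ}
    (h : IsOfFinOrder g) : rightHom g = 1 := by
  obtain ⟨n, hn, hgn⟩ := isOfFinOrder_iff_pow_eq_one.1 (rightHom.isOfFinOrder h)
  have : (n : ℤ) * (toAdd (rightHom g)) = 0 := by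
    have := congrArg toAdd hgn
    simpa [toAdd_pow, nsmul_eq_mul] using this
  rcases mul_eq_zero.1 this with h1 | h2
  · exact absurd (by exact_mod_cast h1) hn.ne'
  · have : toAdd (rightHom g) = 0 := h2
    exact toAdd.injective (by simpa using this)

lemma conj_inl {u : (ZMod 25)ˣ}
    (g : Multiplicative (ZMod 25) ⋊[act25 u] Multiplicative ℤ)
    (x : Multiplicative (ZMod 25)) :
    g * inl x * g⁻¹ = inl (act25 u (rightHom g) x) := by
  conv_lhs => rw [← inl_left_mul_inr_right g]
  rw [mul_inv_rev, show (inl g.left : Multiplicative (ZMod 25) ⋊[act25 u] Multiplicative ℤ)⁻¹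
      = inl g.left⁻¹ from (map_inv _ _).symm]
  have : (inr g.right : Multiplicative (ZMod 25) ⋊[act25 u] Multiplicative ℤ)⁻¹
      = inr g.right⁻¹ := (map_inv _ _).symm
  calc inl g.left * inr g.right * inl x * ((inr g.right)⁻¹ * inl g.left⁻¹)
      = inl g.left * (inr g.right * inl x * (inr g.right)⁻¹) * inl g.left⁻¹ := by group
    _ = inl g.left * inl (act25 u g.right x) * inl g.left⁻¹ := by rw [this, ← inl_aut]
    _ = inl (g.left * act25 u g.right x * g.left⁻¹) := by
          simp only [← map_inv, ← map_mul]
    _ = inl (act25 u (rightHom g) x) := by rw [mul_comm g.left, mul_inv_cancel_right]; rfl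

lemma zmod_cancel {x c d : ZMod 25} (hx : addOrderOf x = 25) (h : c * x = d * x) : c = d := by
  have h0 : (c - d) * x = 0 := by rw [sub_mul, h, sub_self]
  have h1 : (c - d).val • x = 0 := by
    rwa [nsmul_eq_mul, ZMod.natCast_val, ZMod.cast_id]
  have h2 := addOrderOf_dvd_of_nsmul_eq_zero h1
  rw [hx] at h2
  have h3 : (c - d).val = 0 := Nat.eq_zero_of_dvd_of_lt h2 (ZMod.val_lt _)
  exact sub_eq_zero.1 ((ZMod.val_eq_zero _).1 h3)

/-- The groups `N = ⟨a, t | a²⁵ = 1, t a t⁻¹ = a⁶⟩` and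
`N' = ⟨a', t' | a'²⁵ = 1, t' a' t'⁻¹ = a'¹¹⟩`, realized as the semidirect products
`(ℤ/25ℤ) ⋊ ℤ` with the generator of `ℤ` acting by multiplication by `6` resp. `11`,
are not isomorphic. -/
theorem stmt_4 :
    IsEmpty
      ((Multiplicative (ZMod 25) ⋊[act25 (ZMod.unitOfCoprime 6 (by decide))]
          Multiplicative ℤ) ≃*
        (Multiplicative (ZMod 25) ⋊[act25 (ZMod.unitOfCoprime 11 (by decide))]
          Multiplicative ℤ)) := by
  constructor
  intro f
  set u6 : (ZMod 25)ˣ := ZMod.unitOfCoprime 6 (by decide) with hu6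
  set u11 : (ZMod 25)ˣ := ZMod.unitOfCoprime 11 (by decide) with hu11
  set a : Multiplicative (ZMod 25) ⋊[act25 u6] Multiplicative ℤ :=
    inl (ofAdd (1 : ZMod 25)) with ha_def
  set t : Multiplicative (ZMod 25) ⋊[act25 u6] Multiplicative ℤ :=
    inr (ofAdd (1 : ℤ)) with ht_def
  -- order of a is 25
  have ha_ord : orderOf a = 25 := by
    rw [ha_def, orderOf_injective inl inl_injective, orderOf_ofAdd_eq_addOrderOf,
      ZMod.addOrderOf_one]
  have ha_fin : IsOfFinOrder a := by
    rw [← orderOf_pos_iff, ha_ord]; norm_num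
  -- f a lands in the kernel
  have hr : rightHom (f a) = 1 := rightHom_eq_one_of_finOrder (f.toMonoidHom.isOfFinOrder ha_fin)
  have hfa : f a = inl ((f a).left) := by
    conv_lhs => rw [← inl_left_mul_inr_right (f a)]
    rw [show (f a).right = 1 from hr, map_one, mul_one]
  set x' : Multiplicative (ZMod 25) := (f a).left with hx'
  have h_ordx : addOrderOf (toAdd x') = 25 := by
    have h1 : orderOf (f a) = 25 := by
      rw [f.orderOf_eq]; exact ha_ord
    rw [hfa, orderOf_injective inl inl_injective] at h1
    rwa [← orderOf_ofAdd_eq_addOrderOf, ofAdd_toAdd]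
  -- the induced maps on ℤ
  set F : Multiplicative ℤ →* Multiplicative ℤ :=
    rightHom.comp (f.toMonoidHom.comp inr) with hF0
  set F' : Multiplicative ℤ →* Multiplicative ℤ :=
    rightHom.comp (f.symm.toMonoidHom.comp inr) with hF'0
  set ε : ℤ := toAdd (F (ofAdd 1)) with hε
  set ε' : ℤ := toAdd (F' (ofAdd 1)) with hε'
  have hF : ∀ z : ℤ, toAdd (F (ofAdd z)) = z * ε := by
    intro z
    have h1 : (ofAdd z : Multiplicative ℤ) = (ofAdd (1 : ℤ)) ^ z := by
      rw [← ofAdd_zsmul]; norm_num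
    rw [h1, map_zpow, toAdd_zpow, hε, smul_eq_mul]
  have key : ε' * ε = 1 := by
    set g := f.symm (inr (ofAdd (1 : ℤ))) with hg
    have h1 : f g = inr (ofAdd (1 : ℤ)) := f.apply_symm_apply _
    have h2 : rightHom (f (inl g.left * inr g.right)) = ofAdd (1 : ℤ) := by
      rw [inl_left_mul_inr_right, h1, rightHom_inr]
    rw [map_mul, map_mul] at h2
    have h3 : rightHom (f (inl g.left)) = 1 :=
      rightHom_eq_one_of_finOrder
        (f.toMonoidHom.isOfFinOrder ((inl : _ →* _).isOfFinOrder (isOfFinOrder_of_finite _)))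
    rw [h3, one_mul] at h2
    have h4 : g.right = ofAdd ε' := (ofAdd_toAdd _).symm
    rw [h4] at h2
    have h5 := hF ε'
    rw [show F (ofAdd ε') = ofAdd (1 : ℤ) from h2, toAdd_ofAdd] at h5
    exact h5.symm
  have hcase : ε = 1 ∨ ε = -1 :=
    Int.isUnit_iff.1 (IsUnit.of_mul_eq_one (a := ε) ε' (by linarith))
  -- the defining relation
  have hta : t * a * t⁻¹ = a ^ (6 : ℕ) := by
    rw [conj_inl, ht_def, rightHom_inr, act25_apply, ha_def, ← map_pow]
    congr 1
  have hconj := congrArg f hta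
  rw [map_mul, map_mul, map_inv, map_pow, hfa, conj_inl, ← map_pow] at hconj
  have heq := inl_injective hconj
  rw [act25_apply] at heq
  have heq2 : ((u11 ^ ε : (ZMod 25)ˣ) : ZMod 25) * toAdd x' = (6 : ZMod 25) * toAdd x' := by
    have h6 := congrArg toAdd heq
    rw [toAdd_ofAdd, toAdd_pow] at h6
    have hε2 : toAdd (rightHom (f t)) = ε := rfl
    rw [hε2] at h6
    rw [h6]
    norm_num [nsmul_eq_mul]
  have hfin : ((u11 ^ ε : (ZMod 25)ˣ) : ZMod 25) = 6 := zmod_cancel h_ordx heq2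
  rcases hcase with h | h
  · rw [h, zpow_one, hu11, ZMod.coe_unitOfCoprime] at hfin
    exact absurd hfin (by decide)
  · rw [h] at hfin
    have h7 : ((u11 * u11 ^ (-1 : ℤ) : (ZMod 25)ˣ) : ZMod 25) = (11 : ℕ) * 6 := by
      rw [Units.val_mul, hfin, hu11, ZMod.coe_unitOfCoprime]
    rw [zpow_neg_one, mul_inv_cancel] at h7
    exact absurd h7 (by decide)
end

section
/- Let N = (ℤ/25ℤ) ⋊ ℤ with the ℤ-generator acting by multiplication by 6, and N' = (ℤ/25ℤ) ⋊ ℤ with the ℤ-generator acting by multiplication by 11. Then the direct products N × ℤ and N' × ℤ are isomorphic. -/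
namespace SemidirectProduct

variable {N G H G' H' : Type*} [Group N] [Group G] [Group H] [Group G'] [Group H']

def prodMulEquiv (φ : G →* MulAut N) :
    (N ⋊[φ] G) × H ≃* N ⋊[φ.comp (MonoidHom.fst G H)] (G × H) where
  toFun x := ⟨x.1.left, (x.1.right, x.2)⟩
  invFun x := (⟨x.left, x.right.1⟩, x.right.2)
  left_inv _ := rfl
  right_inv _ := rfl
  map_mul' _ _ := rfl

def prodCongr {φ : G →* MulAut N} {ψ : G' →* MulAut N} (e : G × H ≃* G' × H')
    (he : ∀ x, ψ (e x).1 = φ x.1) : (N ⋊[φ] G) × H ≃* (N ⋊[ψ] G') × H' :=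
  (prodMulEquiv φ).trans <|
    (congr (MulEquiv.refl N) e fun x ↦ by ext; simp [he]).trans (prodMulEquiv ψ).symm

end SemidirectProduct

def unimodularMulEquiv (a b c d : ℤ) (h : a * d - b * c = 1) :
    Multiplicative ℤ × Multiplicative ℤ ≃* Multiplicative ℤ × Multiplicative ℤ where
  toFun x := (.ofAdd (a * x.1.toAdd + b * x.2.toAdd), .ofAdd (c * x.1.toAdd + d * x.2.toAdd))
  invFun x := (.ofAdd (d * x.1.toAdd - b * x.2.toAdd), .ofAdd (-c * x.1.toAdd + a * x.2.toAdd))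
  left_inv x := by
    ext
    · simpa only [toAdd_ofAdd] using by linear_combination x.1.toAdd * h
    · simpa only [toAdd_ofAdd] using by linear_combination x.2.toAdd * h
  right_inv x := by
    ext
    · simpa only [toAdd_ofAdd] using by linear_combination x.1.toAdd * h
    · simpa only [toAdd_ofAdd] using by linear_combination x.2.toAdd * h
  map_mul' x y := by
    ext <;> simp only [Prod.fst_mul, Prod.snd_mul, toAdd_mul, toAdd_ofAdd] <;> ring

@[simp]
lemma unimodularMulEquiv_apply_fst (a b c d : ℤ) (h : a * d - b * c = 1)
    (x : Multiplicative ℤ × Multiplicative ℤ) :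
    (unimodularMulEquiv a b c d h x).1 = .ofAdd (a * x.1.toAdd + b * x.2.toAdd) :=
  rfl

lemma mulBy25_eq (u : (ZMod 25)ˣ) :
    mulBy25 u = (MulAutMultiplicative (ZMod 25)).symm (AddAut.mulLeft u) :=
  rfl

lemma act25_apply_s5 (u : (ZMod 25)ˣ) (k : Multiplicative ℤ) :
    act25 u k = mulBy25 (u ^ k.toAdd) := by
  simp only [act25, zpowersHom_apply, mulBy25_eq, map_zpow]

lemma zpow_sq_three_five_eq {G : Type*} [Group G] {u : G} (hu : u ^ 5 = 1) (m n : ℤ) :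
    (u ^ 2) ^ (3 * m + 5 * n) = u ^ m := by
  rw [← zpow_natCast u 2, ← zpow_mul,
    show ((2 : ℕ) : ℤ) * (3 * m + 5 * n) = m + 5 * (m + 2 * n) by push_cast; ring,
    zpow_add, zpow_mul, show (5 : ℤ) = (5 : ℕ) from rfl, zpow_natCast, hu, one_zpow, mul_one]

/-- With `N = (ℤ/25ℤ) ⋊ ℤ` (generator acting by multiplication by `6`) and
`N' = (ℤ/25ℤ) ⋊ ℤ` (generator acting by multiplication by `11`), the direct products
`N × ℤ` and `N' × ℤ` are isomorphic. -/
theorem stmt_5 :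
    Nonempty
      (((Multiplicative (ZMod 25) ⋊[act25 (ZMod.unitOfCoprime 6 (by decide))]
            Multiplicative ℤ) × Multiplicative ℤ) ≃*
        ((Multiplicative (ZMod 25) ⋊[act25 (ZMod.unitOfCoprime 11 (by decide))]
            Multiplicative ℤ) × Multiplicative ℤ)) := by
  set u : (ZMod 25)ˣ := ZMod.unitOfCoprime 6 (by decide)
  have hu5 : u ^ 5 = 1 := by decide
  have hu11 : ZMod.unitOfCoprime 11 (by decide) = u ^ 2 := by decide
  refine ⟨SemidirectProduct.prodCongr (unimodularMulEquiv 3 5 1 2 (by norm_num)) ?_⟩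
  rintro ⟨m, n⟩
  rw [unimodularMulEquiv_apply_fst, act25_apply_s5, act25_apply_s5, toAdd_ofAdd, hu11,
    zpow_sq_three_five_eq hu5]
end

section
/- Let N and N' be infinite virtually cyclic groups with maximal finite normal subgroups C and C' respectively. If there exist injective homomorphisms ι : N → N' and ι' : N' → N, then ι(C) = C' and ι'(C') = C. In particular |C| = |C'|. -/
/-!
A finite subgroup `F` whose normalizer has finite index has finitely many conjugates, and these
form a finite conjugation-invariant set of elements of finite order; by Dietzmann's lemma they
generate a finite normal subgroup. The subgroup `ι(C)` is normalized by `ι(N)`, an infinite and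
hence finite-index subgroup of the virtually cyclic group `N'`, so `ι(C)` lies in a finite normal
subgroup of `N'` and thus in `C'`. Symmetrically `ι'(C') ≤ C`, and comparing cardinalities turns
both inclusions into equalities.
-/

open Subgroup Group
open scoped IsMulCommutative

section

variable {G : Type*} [Group G]

theorem Subgroup.finiteIndex_centralizer_of_finite_conjugatesOf {x : G}
    (hx : (conjugatesOf x).Finite) : (centralizer {x}).FiniteIndex := by
  have : Finite (MulAction.orbit (ConjAct G) x) := by
    refine (hx.subset fun y hy => ?_).to_subtype
    exact (ConjAct.mem_orbit_conjAct.mp hy).symm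
  have : Finite (G ⧸ centralizer {x}) :=
    Finite.of_equiv _ ((MulAction.orbitEquivQuotientStabilizer (ConjAct G) x).trans
      (quotientEquivOfEq (ConjAct.stabilizer_eq_centralizer x)))
  exact finiteIndex_of_finite_quotient

theorem Subgroup.finiteIndex_center_of_conj_mem_of_closure_eq_top {S : Set G} (hS : S.Finite)
    (hconj : ∀ x ∈ S, ∀ g : G, g * x * g⁻¹ ∈ S) (hgen : closure S = ⊤) :
    (center G).FiniteIndex := by
  have : Finite S := hS
  rw [center_eq_infi' hgen]
  refine finiteIndex_iInf fun s => finiteIndex_centralizer_of_finite_conjugatesOf ?_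
  refine hS.subset fun y hy => ?_
  obtain ⟨g, rfl⟩ := isConj_iff.mp hy
  exact hconj s s.2 g

theorem Group.finite_of_closure_eq_top_of_finiteIndex_center [(center G).FiniteIndex] {S : Set G}
    (hS : S.Finite) (hgen : closure S = ⊤) (htors : ∀ s ∈ S, IsOfFinOrder s) : Finite G := by
  have : Group.FG G := Group.fg_iff.mpr ⟨S, hgen, hS⟩
  -- The transfer `g ↦ g ^ [G : Z(G)]` is a homomorphism to the abelian group `Z(G)`, so it sends
  -- the subgroup generated by the torsion elements `S` into the torsion of `Z(G)`.
  have htor : ∀ g : G, IsOfFinOrder g := by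
    intro g
    have hrange : (MonoidHom.transferCenterPow G).range ≤ CommGroup.torsion (center G) := by
      rw [MonoidHom.range_eq_map, ← hgen, MonoidHom.map_closure, closure_le]
      rintro _ ⟨s, hs, rfl⟩
      exact MonoidHom.isOfFinOrder _ (htors s hs)
    have hpow : IsOfFinOrder (g ^ (center G).index) := by
      rw [← MonoidHom.transferCenterPow_apply, Submonoid.isOfFinOrder_coe]
      exact hrange ⟨g, rfl⟩
    exact hpow.of_pow FiniteIndex.index_ne_zero
  have : Finite (center G) := CommGroup.finite_of_fg_isMulTorsion _ fun z =>
    Submonoid.isOfFinOrder_coe.mp (htor z)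
  exact (finite_iff_finite_and_finiteIndex (H := center G)).mpr ⟨inferInstance, inferInstance⟩

/-- Dietzmann's lemma. -/
theorem Subgroup.finite_closure_of_conj_mem {S : Set G} (hS : S.Finite)
    (hconj : ∀ x ∈ S, ∀ g : G, g * x * g⁻¹ ∈ S) (htors : ∀ x ∈ S, IsOfFinOrder x) :
    Finite (closure S) := by
  have hS' : (Subtype.val ⁻¹' S : Set (closure S)).Finite :=
    hS.preimage Subtype.val_injective.injOn
  have := finiteIndex_center_of_conj_mem_of_closure_eq_top hS' (fun x hx g => hconj x hx g)
    closure_closure_coe_preimage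
  exact finite_of_closure_eq_top_of_finiteIndex_center hS' closure_closure_coe_preimage
    fun x hx => Submonoid.isOfFinOrder_coe.mp (htors x hx)

theorem Subgroup.finite_conjugatesOfSet (F : Subgroup G) [Finite F]
    [(normalizer (F : Set G)).FiniteIndex] : (conjugatesOfSet (F : Set G)).Finite := by
  refine (Set.finite_range fun p : (G ⧸ normalizer (F : Set G)) × F =>
    p.1.out * p.2 * p.1.out⁻¹).subset ?_
  intro x hx
  obtain ⟨a, ha, hconj⟩ := mem_conjugatesOfSet_iff.mp hx
  obtain ⟨g, rfl⟩ := isConj_iff.mp hconj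
  obtain ⟨h, hh⟩ := QuotientGroup.mk_out_eq_mul (normalizer (F : Set G)) g
  refine ⟨((g : G ⧸ normalizer (F : Set G)), ⟨(h : G)⁻¹ * a * h, ?_⟩), ?_⟩
  · simpa using (mem_normalizer_iff.mp (inv_mem h.2) a).mp ha
  · simp only [hh]
    group

theorem Subgroup.finite_normalClosure (F : Subgroup G) [Finite F]
    [(normalizer (F : Set G)).FiniteIndex] : Finite (normalClosure (F : Set G)) := by
  refine finite_closure_of_conj_mem F.finite_conjugatesOfSet
    (fun _ hx _ => conj_mem_conjugatesOfSet hx) fun x hx => ?_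
  obtain ⟨a, ha, hconj⟩ := mem_conjugatesOfSet_iff.mp hx
  exact hconj.isOfFinOrder <|
    Submonoid.isOfFinOrder_coe.mpr (isOfFinOrder_of_finite (⟨a, ha⟩ : F))

theorem IsCyclic.finiteIndex_of_ne_bot [IsCyclic G] {K : Subgroup G} (hK : K ≠ ⊥) :
    K.FiniteIndex := by
  obtain ⟨g, hg⟩ := IsCyclic.exists_generator (α := G)
  obtain ⟨⟨k, hkK⟩, hk1⟩ := ne_bot_iff_exists_ne_one.mp hK
  obtain ⟨n, rfl⟩ := mem_zpowers_iff.mp (hg k)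
  have hn : n ≠ 0 := by
    rintro rfl
    exact hk1 (by simp)
  have hfin : IsOfFinOrder (g : G ⧸ K) := isOfFinOrder_iff_zpow_eq_one.mpr
    ⟨n, hn, by rwa [← QuotientGroup.mk_zpow (N := K), QuotientGroup.eq_one_iff]⟩
  have hgen : ∀ q : G ⧸ K, q ∈ zpowers (g : G ⧸ K) := by
    refine fun q => QuotientGroup.induction_on q fun h => ?_
    obtain ⟨m, rfl⟩ := mem_zpowers_iff.mp (hg h)
    exact ⟨m, (QuotientGroup.mk_zpow (N := K) g m).symm⟩
  have : Finite (G ⧸ K) := Set.finite_univ_iff.mp (hfin.finite_zpowers.subset fun q _ => hgen q)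
  exact finiteIndex_of_finite_quotient

theorem Subgroup.finiteIndex_of_infinite_of_isCyclic (H : Subgroup G) [IsCyclic H]
    [H.FiniteIndex] (P : Subgroup G) [Infinite P] : P.FiniteIndex := by
  have hPH : P.subgroupOf H ≠ ⊥ := by
    intro hbot
    have hinj : Function.Injective fun p : P => ((p : G) : G ⧸ H) := by
      intro p q hpq
      have hH : (p : G)⁻¹ * q ∈ H := QuotientGroup.eq.mp hpq
      have hP : (p : G)⁻¹ * q ∈ P := mul_mem (inv_mem p.2) q.2
      have := (subgroupOf_eq_bot.mp hbot).le_bot ⟨hP, hH⟩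
      exact Subtype.ext (inv_mul_eq_one.mp this)
    have := Finite.of_injective _ hinj
    exact not_finite P
  have := IsCyclic.finiteIndex_of_ne_bot hPH
  have : (P ⊓ H).FiniteIndex := ⟨by
    rw [← relIndex_mul_index inf_le_right, inf_relIndex_right]
    exact mul_ne_zero FiniteIndex.index_ne_zero FiniteIndex.index_ne_zero⟩
  exact finiteIndex_of_le (H := P ⊓ H) inf_le_left

end

theorem Subgroup.map_le_of_forall_finite_normal_le {A B : Type*} [Group A] [Group B] [Infinite A]
    (H : Subgroup B) [IsCyclic H] [H.FiniteIndex] {C : Subgroup A} [C.Normal] [Finite C]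
    {C' : Subgroup B} (hC' : ∀ D : Subgroup B, D.Normal → Finite D → D ≤ C') {f : A →* B}
    (hf : Function.Injective f) : C.map f ≤ C' := by
  have : Infinite f.range := Infinite.of_injective _ (MonoidHom.rangeRestrict_injective_iff.mpr hf)
  have : f.range.FiniteIndex := finiteIndex_of_infinite_of_isCyclic H f.range
  have : (normalizer (C.map f : Set B)).FiniteIndex := by
    refine finiteIndex_of_le (H := f.range) ?_
    rw [MonoidHom.range_eq_map, ← normalizer_eq_top C]
    exact le_normalizer_map f
  have : Finite (C.map f) := Finite.of_equiv _ (C.equivMapOfInjective f hf).toEquiv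
  exact le_normalClosure.trans (hC' _ normalClosure_normal (finite_normalClosure _))

/-- Let `N`, `N'` be infinite virtually cyclic groups with maximal finite normal subgroups
`C`, `C'`.  If there are injective homomorphisms `ι : N → N'` and `ι' : N' → N`, then
`ι(C) = C'` and `ι'(C') = C`; in particular `|C| = |C'|`. -/
theorem stmt_17 {N N' : Type*} [Group N] [Group N'] [Infinite N] [Infinite N']
    (hvc : ∃ H : Subgroup N, IsCyclic H ∧ H.FiniteIndex)
    (hvc' : ∃ H : Subgroup N', IsCyclic H ∧ H.FiniteIndex)
    (C : Subgroup N) (C' : Subgroup N')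
    (hCn : C.Normal) (hCfin : Finite C)
    (hCmax : ∀ D : Subgroup N, D.Normal → Finite D → D ≤ C)
    (hC'n : C'.Normal) (hC'fin : Finite C')
    (hC'max : ∀ D : Subgroup N', D.Normal → Finite D → D ≤ C')
    (ι : N →* N') (ι' : N' →* N)
    (hι : Function.Injective ι) (hι' : Function.Injective ι') :
    C.map ι = C' ∧ C'.map ι' = C ∧ Nat.card C = Nat.card C' := by
  obtain ⟨H, _, _⟩ := hvc
  obtain ⟨H', _, _⟩ := hvc'
  have hle : C.map ι ≤ C' := map_le_of_forall_finite_normal_le H' hC'max hι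
  have hle' : C'.map ι' ≤ C := map_le_of_forall_finite_normal_le H hCmax hι'
  have hcard : Nat.card C = Nat.card C' :=
    le_antisymm (card_map_of_injective hι ▸ card_le_of_le hle)
      (card_map_of_injective hι' ▸ card_le_of_le hle')
  refine ⟨eq_of_le_of_card_ge hle ?_, eq_of_le_of_card_ge hle' ?_, hcard⟩
  · rw [card_map_of_injective hι, hcard]
  · rw [card_map_of_injective hι', hcard]
end

section
/- Let G be a group that splits as an amalgamated free product G = A *_C B over a finite subgroup C. If C has index 2 in N_A(C) and index 2 in N_B(C), then the subgroup of G generated by N_A(C) and N_B(C) is isomorphic to the amalgamated product N_A(C) *_C N_B(C), and is an infinite virtually cyclic group of dihedral type with maximal finite normal subgroup containing C. -/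
universe u

universe v w

open Multiplicative DihedralGroup Monoid Monoid.PushoutI Monoid.PushoutI.NormalWord
  Monoid.CoprodI Subgroup Function

namespace Stmt19

/-! ### Small `ZMod 2` and `ZMod 0` helpers -/

lemma m2cases (z : Multiplicative (ZMod 2)) : z = 1 ∨ z = ofAdd 1 := by revert z; decide
lemma m2mul : (ofAdd 1 : Multiplicative (ZMod 2)) * ofAdd 1 = 1 := by decide
lemma m2ne : (ofAdd 1 : Multiplicative (ZMod 2)) ≠ 1 := by decide

def homM2 {K : Type*} [Monoid K] (x : K) (hx : x * x = 1) : Multiplicative (ZMod 2) →* K where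
  toFun z := if z = 1 then 1 else x
  map_one' := if_pos rfl
  map_mul' a b := by
    rcases m2cases a with rfl | rfl <;> rcases m2cases b with rfl | rfl <;>
      simp [m2mul, m2ne, hx]

lemma homM2_ofAdd {K : Type*} [Monoid K] (x : K) (hx : x * x = 1) :
    homM2 x hx (ofAdd 1) = x := by simp [homM2, m2ne]

open scoped Classical in
noncomputable def homOf2 {X : Type*} [Group X] (H : Subgroup X) (h2 : H.index = 2) :
    X →* Multiplicative (ZMod 2) where
  toFun x := if x ∈ H then 1 else ofAdd 1
  map_one' := if_pos (one_mem H)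
  map_mul' x y := by
    by_cases hx : x ∈ H <;> by_cases hy : y ∈ H <;>
      simp [hx, hy, Subgroup.mul_mem_iff_of_index_two h2] <;> decide

lemma homOf2_mem {X : Type*} [Group X] {H : Subgroup X} (h2 : H.index = 2) {x : X} (hx : x ∈ H) :
    homOf2 H h2 x = 1 := by simp [homOf2, hx]

lemma homOf2_not_mem {X : Type*} [Group X] {H : Subgroup X} (h2 : H.index = 2) {x : X}
    (hx : x ∉ H) : homOf2 H h2 x = ofAdd 1 := by simp [homOf2, hx]

lemma homOf2_eq_one_iff {X : Type*} [Group X] {H : Subgroup X} (h2 : H.index = 2) {x : X} :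
    homOf2 H h2 x = 1 ↔ x ∈ H := by
  by_cases hx : x ∈ H <;> simp [homOf2, hx]

/-! ### The infinite dihedral group as a coproduct of two copies of `ZMod 2` -/

abbrev DD := Monoid.Coprod (Multiplicative (ZMod 2)) (Multiplicative (ZMod 2))

def aa : DD := Coprod.inl (ofAdd 1)
def bb : DD := Coprod.inr (ofAdd 1)
noncomputable def tt : DD := aa * bb

def zi (n : ℤ) : ZMod 0 := n
def zz (k : ZMod 0) : ℤ := k

lemma aa_mul_aa : aa * aa = 1 := by
  rw [aa, ← map_mul, m2mul, map_one]
lemma bb_mul_bb : bb * bb = 1 := by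
  rw [bb, ← map_mul, m2mul, map_one]
lemma aa_inv : aa⁻¹ = aa := inv_eq_of_mul_eq_one_right aa_mul_aa
lemma bb_inv : bb⁻¹ = bb := inv_eq_of_mul_eq_one_right bb_mul_bb

lemma aa_tt_aa (k : ℤ) : aa * tt ^ k * aa = tt ^ (-k) := by
  have h : aa * tt * aa = tt⁻¹ := by
    rw [tt, mul_inv_rev, aa_inv, bb_inv]
    group
    rw [aa_mul_aa]
    group
  have h2 := map_zpow (MulAut.conj aa) tt k
  simp only [MulAut.conj_apply, aa_inv] at h2
  rw [h, inv_zpow, ← zpow_neg] at h2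
  exact h2

lemma tt_zpow_aa (k : ℤ) : tt ^ k * aa = aa * tt ^ (-k) := by
  have h := aa_tt_aa (-k)
  rw [neg_neg] at h
  rw [← h, mul_assoc, aa_mul_aa, mul_one]

lemma r_one_zpow (n : ℤ) : (r 1 : DihedralGroup 0) ^ n = r (zi n) := by
  induction n using Int.induction_on with
  | zero => rw [zpow_zero, one_def]; rfl
  | succ n ih =>
      rw [zpow_add_one, ih, r_mul_r]
      show r (zi (n + 1)) = _
      rfl
  | pred n ih =>
      rw [zpow_sub_one, ih]
      have hinv : (r 1 : DihedralGroup 0)⁻¹ = r (zi (-1)) := by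
        apply inv_eq_of_mul_eq_one_right
        rw [r_mul_r, one_def]
        rfl
      rw [hinv, r_mul_r]
      rfl

lemma r_inv (k : ZMod 0) : (r k : DihedralGroup 0)⁻¹ = r (-k) := by
  apply inv_eq_of_mul_eq_one_right
  rw [r_mul_r, one_def, add_neg_cancel]

lemma r_zpow (k : ZMod 0) (m : ℤ) : (r k : DihedralGroup 0) ^ m = r (zi m * k) := by
  induction m using Int.induction_on with
  | zero =>
      rw [zpow_zero, one_def]
      congr 1
      show (0 : ℤ) = 0 * zz k
      ring
  | succ n ih =>
      rw [zpow_add_one, ih, r_mul_r]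
      congr 1
      show (n : ℤ) * zz k + zz k = ((n:ℤ) + 1) * zz k
      ring
  | pred n ih =>
      rw [zpow_sub_one, ih, r_inv, r_mul_r]
      congr 1
      show (-(n:ℤ)) * zz k + -(zz k) = (-(n:ℤ) - 1) * zz k
      ring

lemma dihedral_norm_fin (D : Subgroup (DihedralGroup 0)) (hn : D.Normal) (hf : Finite D) :
    D = ⊥ := by
  rw [eq_bot_iff]
  intro x hx
  cases x with
  | r k =>
      simp only [Subgroup.mem_bot]
      rcases eq_or_ne k 0 with rfl | hk
      · rw [one_def]
      · exfalso
        have key : ∀ m : ℤ, r (zi m * k) ∈ D := fun m => by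
          have := D.zpow_mem hx m
          rwa [r_zpow] at this
        have hinj : Injective (fun m : ℤ => (⟨r (zi m * k), key m⟩ : D)) := by
          intro m m' h
          simp only [Subtype.mk.injEq, r.injEq] at h
          have h' : m * zz k = m' * zz k := h
          have hk' : zz k ≠ 0 := fun h0 => hk (congrArg zi h0)
          exact mul_right_cancel₀ hk' h'
        haveI := Infinite.of_injective _ hinj
        exact not_finite ↥D
  | sr k =>
      exfalso
      have key : ∀ m : ℤ, sr (k - zi m + -zi m) ∈ D := fun m => by
        have h := hn.conj_mem _ hx (r (zi m))
        rwa [r_mul_sr, r_inv, sr_mul_r] at h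
      have hinj : Injective (fun m : ℤ => (⟨sr (k - zi m + -zi m), key m⟩ : D)) := by
        intro m m' h
        simp only [Subtype.mk.injEq, sr.injEq] at h
        have h' : zz k - m + -m = zz k - m' + -m' := h
        omega
      haveI := Infinite.of_injective _ hinj
      exact not_finite ↥D

lemma dihedral_cases (x : DihedralGroup 0) :
    ∃ n : ℤ, x = (r 1 : DihedralGroup 0) ^ n ∨ x = sr 0 * (r 1 : DihedralGroup 0) ^ n := by
  cases x with
  | r k => exact ⟨zz k, Or.inl (by rw [r_one_zpow]; rfl)⟩
  | sr k =>
      refine ⟨zz k, Or.inr ?_⟩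
      rw [r_one_zpow, sr_mul_r]
      congr 1
      show zz k = 0 + zz k
      ring

noncomputable def chi : DD →* DihedralGroup 0 :=
  Coprod.lift (homM2 (sr 0) (sr_mul_self 0)) (homM2 (sr 1) (sr_mul_self 1))

lemma chi_aa : chi aa = sr 0 := by rw [aa, chi, Coprod.lift_apply_inl, homM2_ofAdd]
lemma chi_bb : chi bb = sr 1 := by rw [bb, chi, Coprod.lift_apply_inr, homM2_ofAdd]
lemma chi_tt : chi tt = r 1 := by
  rw [tt, map_mul, chi_aa, chi_bb, sr_mul_sr]
  congr 1

noncomputable def xiFun : DihedralGroup 0 → DD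
  | .r k => tt ^ zz k
  | .sr k => aa * tt ^ zz k

noncomputable def xi : DihedralGroup 0 →* DD where
  toFun := xiFun
  map_one' := by rw [one_def]; show tt ^ (0 : ℤ) = 1; rw [zpow_zero]
  map_mul' x y := by
    rcases x with i | i <;> rcases y with j | j
    · rw [r_mul_r]
      show tt ^ (zz i + zz j) = tt ^ zz i * tt ^ zz j
      rw [zpow_add]
    · rw [r_mul_sr]
      show aa * tt ^ (zz j - zz i) = tt ^ zz i * (aa * tt ^ zz j)
      rw [← mul_assoc, tt_zpow_aa, mul_assoc, ← zpow_add]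
      congr 2
      ring
    · rw [sr_mul_r]
      show aa * tt ^ (zz i + zz j) = aa * tt ^ zz i * tt ^ zz j
      rw [mul_assoc, ← zpow_add]
    · rw [sr_mul_sr]
      show tt ^ (zz j - zz i) = aa * tt ^ zz i * (aa * tt ^ zz j)
      have h : aa * tt ^ zz i * (aa * tt ^ zz j) = aa * (tt ^ zz i * aa) * tt ^ zz j := by
        group
      rw [h, tt_zpow_aa, ← mul_assoc aa aa, aa_mul_aa, one_mul, ← zpow_add]
      congr 1
      ring

lemma xi_chi : xi.comp chi = MonoidHom.id DD := by
  apply Coprod.hom_ext <;> refine MonoidHom.ext fun z => ?_ <;> rcases m2cases z with rfl | rfl <;>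
    simp [chi, homM2_ofAdd]
  · show xiFun (sr 0) = aa
    show aa * tt ^ (0:ℤ) = aa
    rw [zpow_zero, mul_one]
  · show xiFun (sr 1) = bb
    show aa * tt ^ (1:ℤ) = bb
    rw [zpow_one, tt, ← mul_assoc, aa_mul_aa, one_mul]

lemma chi_injective : Injective chi := by
  have h : Function.LeftInverse xi chi := fun x => by
    have h2 := DFunLike.congr_fun xi_chi x
    simpa using h2
  exact h.injective

lemma chi_surjective : Surjective chi := by
  intro x
  rcases dihedral_cases x with ⟨n, rfl | rfl⟩
  · exact ⟨tt ^ n, by rw [map_zpow, chi_tt]⟩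
  · exact ⟨aa * tt ^ n, by rw [map_mul, map_zpow, chi_aa, chi_tt]⟩

/-! ### Generalities on maps between amalgamated products -/

section PushoutAux

variable {ι : Type*} {H H2 : Type*} {G : ι → Type*} {K : ι → Type*}
  [Group H] [Group H2] [∀ i, Group (G i)] [∀ i, Group (K i)]

lemma eq_one_of_mem_set_of_mem_range {φ : ∀ i, H →* G i} (d : Transversal φ) {i : ι} {g : G i}
    (hset : g ∈ d.set i) (hrange : g ∈ (φ i).range) : g = 1 := by
  have hu := (d.compl i).existsUnique g
  have h1 := hu.unique (y₁ := (⟨⟨g, hrange⟩, ⟨1, d.one_mem i⟩⟩ : _ × _))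
    (y₂ := (⟨⟨1, one_mem _⟩, ⟨g, hset⟩⟩ : _ × _)) (by simp) (by simp)
  have := congrArg (fun p => (p.2 : G i)) h1
  simpa using this.symm

lemma exists_decomp (φ : ∀ i, H →* G i) (hφ : ∀ i, Injective (φ i)) (x : PushoutI φ) :
    ∃ (c : H) (w : Word G), Reduced φ w ∧ x = base φ c * ofCoprodI w.prod := by
  classical
  obtain ⟨d⟩ := transversal_nonempty φ hφ
  set w0 : NormalWord d := x • (.empty : NormalWord d) with hw0
  refine ⟨w0.head, w0.toWord, ?_, ?_⟩
  · intro g hg hrange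
    exact w0.ne_one g hg (eq_one_of_mem_set_of_mem_range d (w0.normalized g.1 g.2 hg) hrange)
  · have h1 : w0.prod = x := by
      rw [hw0, NormalWord.prod_smul, NormalWord.prod_empty, mul_one]
    rw [← h1]
    rfl

variable (φ : ∀ i, H →* G i) (ψ : ∀ i, H2 →* K i) (f0 : H →* H2) (f : ∀ i, G i →* K i)
    (hcomm : ∀ i, (f i).comp (φ i) = (ψ i).comp f0)

def pushoutMap : PushoutI φ →* PushoutI ψ :=
  PushoutI.lift (fun i => (PushoutI.of (φ := ψ) i).comp (f i)) ((base ψ).comp f0)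
    (by
      intro i
      rw [MonoidHom.comp_assoc, hcomm i, ← MonoidHom.comp_assoc, of_comp_eq_base])

lemma pushoutMap_of (i : ι) (g : G i) : pushoutMap φ ψ f0 f hcomm (of i g) = of i (f i g) := by
  rw [pushoutMap, PushoutI.lift_of]
  rfl

lemma pushoutMap_base (c : H) : pushoutMap φ ψ f0 f hcomm (base φ c) = base ψ (f0 c) := by
  rw [pushoutMap, PushoutI.lift_base]
  rfl

variable (hf : ∀ i (g : G i), g ∉ (φ i).range → f i g ∉ (ψ i).range)

include hf hcomm in
lemma word_map (w : Word G) (hw : Reduced φ w) :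
    ∃ w' : Word K, Reduced ψ w' ∧ w'.toList.map Sigma.fst = w.toList.map Sigma.fst ∧
      ofCoprodI w'.prod = pushoutMap φ ψ f0 f hcomm (ofCoprodI w.prod) := by
  induction w using Word.consRecOn with
  | empty =>
      exact ⟨.empty, by simp [Reduced, Word.empty], by simp [Word.empty], by
        simp [Word.empty, Word.prod]⟩
  | cons i g w hIdx hg1 ih =>
      obtain ⟨w', hred, hmap, hprod⟩ := ih (fun l hl => hw l (List.mem_cons_of_mem _ hl))
      have hg : g ∉ (φ i).range := hw ⟨i, g⟩ List.mem_cons_self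
      have hfstIdx : w'.fstIdx ≠ some i := by
        rw [Word.fstIdx, ← List.head?_map, hmap, List.head?_map]
        exact hIdx
      have hfg1 : f i g ≠ 1 := fun h => hf i g hg (h ▸ one_mem (ψ i).range)
      refine ⟨Word.cons (f i g) w' hfstIdx hfg1, ?_, ?_, ?_⟩
      · intro l hl
        simp only [Word.cons, List.mem_cons] at hl
        rcases hl with rfl | hl
        · exact hf i g hg
        · exact hred l hl
      · simp only [Word.cons, List.map_cons, hmap]
      · rw [Word.prod_cons, Word.prod_cons, map_mul, map_mul, ofCoprodI_of, ofCoprodI_of,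
          map_mul, pushoutMap_of, hprod]

include hf hcomm in
lemma pushoutMap_mem_base_range (hφ : ∀ i, Injective (φ i)) (hψ : ∀ i, Injective (ψ i))
    (x : PushoutI φ) (hx : pushoutMap φ ψ f0 f hcomm x ∈ (base ψ).range) :
    x ∈ (base φ).range := by
  obtain ⟨c, w, hred, rfl⟩ := exists_decomp φ hφ x
  obtain ⟨w', hred', hmap, hprod⟩ := word_map φ ψ f0 f hcomm hf w hred
  have hx' : ofCoprodI w'.prod ∈ (base ψ).range := by
    rw [hprod]
    have h2 : pushoutMap φ ψ f0 f hcomm (base φ c * ofCoprodI w.prod)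
        = base ψ (f0 c) * pushoutMap φ ψ f0 f hcomm (ofCoprodI w.prod) := by
      rw [map_mul, pushoutMap_base]
    obtain ⟨h, hh⟩ := hx
    refine ⟨(f0 c)⁻¹ * h, ?_⟩
    rw [map_mul, map_inv, hh, h2]
    group
  have hempty : w' = .empty := Reduced.eq_empty_of_mem_range hψ hred' hx'
  subst hempty
  have hnil : w.toList = [] := by
    have := hmap.symm
    simpa [Word.empty] using this
  have hw1 : w.prod = 1 := by
    rw [Word.prod, hnil]
    simp
  rw [hw1, map_one, mul_one]
  exact ⟨c, rfl⟩

include hf hcomm in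
lemma pushoutMap_injective (hφ : ∀ i, Injective (φ i)) (hψ : ∀ i, Injective (ψ i))
    (hf0 : Injective f0) : Injective (pushoutMap φ ψ f0 f hcomm) := by
  have h1 : ∀ x, pushoutMap φ ψ f0 f hcomm x = 1 → x = 1 := by
    intro x hx
    obtain ⟨c, hc⟩ := pushoutMap_mem_base_range φ ψ f0 f hcomm hf hφ hψ x
      (hx ▸ one_mem (base ψ).range)
    subst hc
    rw [pushoutMap_base] at hx
    have h3 : f0 c = 1 := base_injective hψ (by simpa using hx)
    rw [hf0 (by simpa using h3 : f0 c = f0 1), map_one]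
  intro a b hab
  exact mul_inv_eq_one.mp (h1 (a * b⁻¹) (by rw [map_mul, map_inv, hab]; group))

end PushoutAux

/-! ### Families over `Bool` -/

@[reducible] def fam (X : Type v) (Y : Type v) : Bool → Type v := fun b => cond b X Y

instance famGroup {X Y : Type v} [Group X] [Group Y] : ∀ b, Group (fam X Y b)
  | true => ‹Group X›
  | false => ‹Group Y›

@[reducible] def famHom {C' : Type w} {X Y : Type v} [Group C'] [Group X] [Group Y]
    (f : C' →* X) (g : C' →* Y) : ∀ b, C' →* fam X Y b
  | true => f
  | false => g

@[reducible] def famMap {X Y : Type v} {X' Y' : Type w} [Group X] [Group Y] [Group X'] [Group Y']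
    (f : X →* X') (g : Y →* Y') : ∀ b, fam X Y b →* fam X' Y' b
  | true => f
  | false => g

@[reducible] def famTo {X Y : Type v} {Z : Type w} [Group X] [Group Y] [Group Z]
    (f : X →* Z) (g : Y →* Z) : ∀ b, fam X Y b →* Z
  | true => f
  | false => g

end Stmt19

open Stmt19

set_option maxHeartbeats 1000000

/-- Let `G = A *_C B` be an amalgamated free product over a finite group `C` (the amalgam
structure is given by injective maps `iA, iB, kA, kB` and the pushout universal property).
If `C` has index 2 in `N_A(C)` and in `N_B(C)`, then the subgroup `S ≤ G` generated by
`N_A(C)` and `N_B(C)` is the amalgamated product `N_A(C) *_C N_B(C)` (expressed by the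
pushout universal property of `S`), and `S` is an infinite virtually cyclic group of
dihedral type whose maximal finite normal subgroup contains `C`. -/
theorem stmt_19 {C A B G : Type u} [Group C] [Group A] [Group B] [Group G] [Finite C]
    (iA : C →* A) (iB : C →* B) (kA : A →* G) (kB : B →* G)
    (hiA : Function.Injective iA) (hiB : Function.Injective iB)
    (hkA : Function.Injective kA) (hkB : Function.Injective kB)
    (hk : kA.comp iA = kB.comp iB)
    (hUP : ∀ (K : Type u) [Group K] (fA : A →* K) (fB : B →* K),
      fA.comp iA = fB.comp iB → ∃! f : G →* K, f.comp kA = fA ∧ f.comp kB = fB)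
    (hA2 : iA.range.relIndex (Subgroup.normalizer (iA.range : Set A)) = 2)
    (hB2 : iB.range.relIndex (Subgroup.normalizer (iB.range : Set B)) = 2) :
    ∃ S : Subgroup G,
      S = ((Subgroup.normalizer (iA.range : Set A)).map kA) ⊔ ((Subgroup.normalizer (iB.range : Set B)).map kB) ∧
      (∃ (mA : (Subgroup.normalizer (iA.range : Set A)) →* S) (mB : (Subgroup.normalizer (iB.range : Set B)) →* S),
        (∀ x : (Subgroup.normalizer (iA.range : Set A)), ((mA x : S) : G) = kA x) ∧
        (∀ x : (Subgroup.normalizer (iB.range : Set B)), ((mB x : S) : G) = kB x) ∧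
        ∀ (K : Type u) [Group K] (fA : (Subgroup.normalizer (iA.range : Set A)) →* K)
          (fB : (Subgroup.normalizer (iB.range : Set B)) →* K),
          (∀ c : C, fA ⟨iA c, Subgroup.le_normalizer ⟨c, rfl⟩⟩ =
              fB ⟨iB c, Subgroup.le_normalizer ⟨c, rfl⟩⟩) →
          ∃! f : S →* K, f.comp mA = fA ∧ f.comp mB = fB) ∧
      Infinite S ∧
      (∃ H : Subgroup S, IsCyclic H ∧ H.FiniteIndex) ∧
      (∃ M : Subgroup S, M.Normal ∧ Finite M ∧
        (∀ D : Subgroup S, D.Normal → Finite D → D ≤ M) ∧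
        (iA.range.map kA).comap S.subtype ≤ M ∧
        ∃ π : S →* Monoid.Coprod (Multiplicative (ZMod 2)) (Multiplicative (ZMod 2)),
          Function.Surjective π ∧ π.ker = M) := by
  classical
  set NA := Subgroup.normalizer (iA.range : Set A) with hNAdef
  set NB := Subgroup.normalizer (iB.range : Set B) with hNBdef
  set jA : C →* ↥NA := iA.codRestrict NA (fun c => Subgroup.le_normalizer ⟨c, rfl⟩) with hjAdef
  set jB : C →* ↥NB := iB.codRestrict NB (fun c => Subgroup.le_normalizer ⟨c, rfl⟩) with hjBdef
  have hjAinj : Injective jA := fun x y h => hiA (congrArg Subtype.val h)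
  have hjBinj : Injective jB := fun x y h => hiB (congrArg Subtype.val h)
  set phiN : ∀ b, C →* fam ↥NA ↥NB b := famHom jA jB with hphiNdef
  set phiG : ∀ b, C →* fam A B b := famHom iA iB with hphiGdef
  have hphiNinj : ∀ b, Injective (phiN b) := by rintro (_|_); exacts [hjBinj, hjAinj]
  have hphiGinj : ∀ b, Injective (phiG b) := by rintro (_|_); exacts [hiB, hiA]
  -- the map from the pushout of the normalizers to the pushout of `A` and `B`
  have hcommG : ∀ b, (famMap NA.subtype NB.subtype b).comp (phiN b)
      = (phiG b).comp (MonoidHom.id C) := by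
    rintro (_|_) <;> rfl
  set PhiG : PushoutI phiN →* PushoutI phiG :=
    pushoutMap phiN phiG (MonoidHom.id C) (famMap NA.subtype NB.subtype) hcommG with hPhiGdef
  have hfG : ∀ b (g : fam ↥NA ↥NB b), g ∉ (phiN b).range →
      famMap NA.subtype NB.subtype b g ∉ (phiG b).range := by
    rintro (_|_) g hg ⟨c, hc⟩
    · exact hg ⟨c, Subtype.ext hc⟩
    · exact hg ⟨c, Subtype.ext hc⟩
  have hPhiGinj : Injective PhiG :=
    pushoutMap_injective phiN phiG (MonoidHom.id C) _ hcommG hfG hphiNinj hphiGinj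
      (fun x y h => h)
  -- the isomorphism `PushoutI phiG ≃ G`
  have hcommT : ∀ b, (famTo kA kB b).comp (phiG b) = kA.comp iA := by
    rintro (_|_)
    · exact hk.symm
    · rfl
  set ThetaG : PushoutI phiG →* G := PushoutI.lift (famTo kA kB) (kA.comp iA) hcommT
    with hThetaGdef
  have hThetaG_ofT : ∀ a : A, ThetaG (PushoutI.of (φ := phiG) true a) = kA a := by
    intro a
    rw [hThetaGdef]
    exact PushoutI.lift_of _ _ _ _
  have hThetaG_ofF : ∀ b : B, ThetaG (PushoutI.of (φ := phiG) false b) = kB b := by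
    intro b
    rw [hThetaGdef]
    exact PushoutI.lift_of _ _ _ _
  have hofcomp : (PushoutI.of (φ := phiG) true).comp iA
      = (PushoutI.of (φ := phiG) false).comp iB := by
    have e1 : (PushoutI.of (φ := phiG) true).comp iA = base phiG := of_comp_eq_base true
    have e2 : (PushoutI.of (φ := phiG) false).comp iB = base phiG := of_comp_eq_base false
    exact e1.trans e2.symm
  obtain ⟨Lam, ⟨hLamA, hLamB⟩, -⟩ := hUP (PushoutI phiG)
    (PushoutI.of (φ := phiG) true) (PushoutI.of (φ := phiG) false) hofcomp
  have hLamTheta : Lam.comp ThetaG = MonoidHom.id (PushoutI phiG) := by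
    apply PushoutI.hom_ext_nonempty
    rintro (_|_) <;> ext g
    · show Lam (ThetaG (PushoutI.of (φ := phiG) false g)) = PushoutI.of (φ := phiG) false g
      rw [hThetaG_ofF]
      exact DFunLike.congr_fun hLamB g
    · show Lam (ThetaG (PushoutI.of (φ := phiG) true g)) = PushoutI.of (φ := phiG) true g
      rw [hThetaG_ofT]
      exact DFunLike.congr_fun hLamA g
  have hThetaGinj : Injective ThetaG := by
    have hli : Function.LeftInverse Lam ThetaG := fun x => DFunLike.congr_fun hLamTheta x
    exact hli.injective
  -- the injective map from the pushout of the normalizers to `G`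
  set Phi : PushoutI phiN →* G := ThetaG.comp PhiG with hPhidef
  have hPhiinj : Injective Phi := hThetaGinj.comp hPhiGinj
  have hPhi_ofT : ∀ n : ↥NA, Phi (PushoutI.of (φ := phiN) true n) = kA ↑n := by
    intro n
    show ThetaG (PhiG (PushoutI.of (φ := phiN) true n)) = kA ↑n
    rw [hPhiGdef, pushoutMap_of]
    exact hThetaG_ofT ↑n
  have hPhi_ofF : ∀ n : ↥NB, Phi (PushoutI.of (φ := phiN) false n) = kB ↑n := by
    intro n
    show ThetaG (PhiG (PushoutI.of (φ := phiN) false n)) = kB ↑n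
    rw [hPhiGdef, pushoutMap_of]
    exact hThetaG_ofF ↑n
  set SS : Subgroup G := NA.map kA ⊔ NB.map kB with hSSdef
  have hof_memT : ∀ g : ↥NA, Phi (PushoutI.of (φ := phiN) true g) ∈ SS := by
    intro g
    rw [hPhi_ofT]
    exact Subgroup.mem_sup_left (Subgroup.mem_map.mpr ⟨↑g, g.2, rfl⟩)
  have hof_memF : ∀ g : ↥NB, Phi (PushoutI.of (φ := phiN) false g) ∈ SS := by
    intro g
    rw [hPhi_ofF]
    exact Subgroup.mem_sup_right (Subgroup.mem_map.mpr ⟨↑g, g.2, rfl⟩)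
  have hof_mem : ∀ b (g : fam ↥NA ↥NB b), Phi (PushoutI.of (φ := phiN) b g) ∈ SS := by
    rintro (_|_) g
    · exact hof_memF g
    · exact hof_memT g
  have hmemS : ∀ x : PushoutI phiN, Phi x ∈ SS := by
    intro x
    induction x using PushoutI.induction_on with
    | of b g => exact hof_mem b g
    | base c =>
        rw [← of_apply_eq_base phiN true c]
        exact hof_mem true _
    | mul x y hx hy =>
        rw [map_mul]
        exact mul_mem hx hy
  have hSle : SS ≤ Phi.range := by
    apply sup_le
    · rintro x ⟨a, ha, rfl⟩
      exact ⟨PushoutI.of (φ := phiN) true ⟨a, ha⟩, hPhi_ofT _⟩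
    · rintro x ⟨b, hb, rfl⟩
      exact ⟨PushoutI.of (φ := phiN) false ⟨b, hb⟩, hPhi_ofF _⟩
  set eh : PushoutI phiN →* ↥SS := Phi.codRestrict SS hmemS with hehdef
  have hehinj : Injective eh := fun x y h => hPhiinj (congrArg Subtype.val h)
  have hehsurj : Surjective eh := by
    rintro ⟨s, hs⟩
    obtain ⟨x, hx⟩ := hSle hs
    exact ⟨x, Subtype.ext hx⟩
  set e : PushoutI phiN ≃* ↥SS := MulEquiv.ofBijective eh ⟨hehinj, hehsurj⟩ with hedef
  have hsymm : ∀ x : PushoutI phiN, e.symm (eh x) = x := fun x => e.symm_apply_apply x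
  have happ : ∀ x : PushoutI phiN, (e x : ↥SS) = eh x := fun _ => rfl
  set mA : ↥NA →* ↥SS := eh.comp (PushoutI.of (φ := phiN) true) with hmAdef
  set mB : ↥NB →* ↥SS := eh.comp (PushoutI.of (φ := phiN) false) with hmBdef
  have hcoeA : ∀ x : ↥NA, ((mA x : ↥SS) : G) = kA ↑x := fun x => hPhi_ofT x
  have hcoeB : ∀ x : ↥NB, ((mB x : ↥SS) : G) = kB ↑x := fun x => hPhi_ofF x
  -- the quotient maps to `Multiplicative (ZMod 2)`
  set fA2 : ↥NA →* Multiplicative (ZMod 2) := homOf2 (iA.range.subgroupOf NA) hA2 with hfA2def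
  set fB2 : ↥NB →* Multiplicative (ZMod 2) := homOf2 (iB.range.subgroupOf NB) hB2 with hfB2def
  set psi0 : ∀ b, PUnit.{1} →* fam (Multiplicative (ZMod 2)) (Multiplicative (ZMod 2)) b :=
    famHom 1 1 with hpsi0def
  have hpsi0inj : ∀ b, Injective (psi0 b) := by
    rintro (_|_) <;> exact fun x y _ => Subsingleton.elim x y
  have hcomm0 : ∀ b, (famMap fA2 fB2 b).comp (phiN b) = (psi0 b).comp (1 : C →* PUnit.{1}) := by
    rintro (_|_) <;> ext c
    · show fB2 (jB c) = psi0 false 1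
      rw [map_one]
      exact homOf2_mem hB2 (Subgroup.mem_subgroupOf.mpr ⟨c, rfl⟩)
    · show fA2 (jA c) = psi0 true 1
      rw [map_one]
      exact homOf2_mem hA2 (Subgroup.mem_subgroupOf.mpr ⟨c, rfl⟩)
  have hf0 : ∀ b (g : fam ↥NA ↥NB b), g ∉ (phiN b).range →
      famMap fA2 fB2 b g ∉ (psi0 b).range := by
    rintro (_|_) g hg ⟨u, hu⟩
    · have hu1 : fB2 g = 1 := by
        have h2 : famMap fA2 fB2 false g = psi0 false u := hu.symm
        rw [Subsingleton.elim u 1, map_one] at h2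
        exact h2
      have := (homOf2_eq_one_iff hB2).mp hu1
      obtain ⟨c, hc⟩ := Subgroup.mem_subgroupOf.mp this
      exact hg ⟨c, Subtype.ext hc⟩
    · have hu1 : fA2 g = 1 := by
        have h2 : famMap fA2 fB2 true g = psi0 true u := hu.symm
        rw [Subsingleton.elim u 1, map_one] at h2
        exact h2
      have := (homOf2_eq_one_iff hA2).mp hu1
      obtain ⟨c, hc⟩ := Subgroup.mem_subgroupOf.mp this
      exact hg ⟨c, Subtype.ext hc⟩
  set L0 : PushoutI phiN →* PushoutI psi0 :=
    pushoutMap phiN psi0 (1 : C →* PUnit.{1}) (famMap fA2 fB2) hcomm0 with hL0def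
  -- the pushout over the trivial group maps to the coproduct
  have hcommth : ∀ b, ((famTo (Coprod.inl : Multiplicative (ZMod 2) →* DD)
      (Coprod.inr : Multiplicative (ZMod 2) →* DD)) b).comp (psi0 b)
      = (1 : PUnit.{1} →* DD) := by
    rintro (_|_) <;> ext u
    · show (Coprod.inr (1 : Multiplicative (ZMod 2)) : DD) = 1
      rw [map_one]
    · show (Coprod.inl (1 : Multiplicative (ZMod 2)) : DD) = 1
      rw [map_one]
  set thetaH : PushoutI psi0 →* DD :=
    PushoutI.lift (famTo Coprod.inl Coprod.inr) 1 hcommth with hthetaHdef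
  set thetaInv : DD →* PushoutI psi0 :=
    Coprod.lift (PushoutI.of (φ := psi0) true) (PushoutI.of (φ := psi0) false) with hthetaInvdef
  have hthetali : thetaInv.comp thetaH = MonoidHom.id (PushoutI psi0) := by
    apply PushoutI.hom_ext_nonempty
    rintro (_|_) <;> ext g
    · show thetaInv (thetaH (PushoutI.of (φ := psi0) false g))
        = PushoutI.of (φ := psi0) false g
      rw [hthetaHdef, PushoutI.lift_of]
      show thetaInv (Coprod.inr g) = _
      rw [hthetaInvdef, Coprod.lift_apply_inr]
    · show thetaInv (thetaH (PushoutI.of (φ := psi0) true g))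
        = PushoutI.of (φ := psi0) true g
      rw [hthetaHdef, PushoutI.lift_of]
      show thetaInv (Coprod.inl g) = _
      rw [hthetaInvdef, Coprod.lift_apply_inl]
  have hthetaHinj : Injective thetaH := by
    have hli : Function.LeftInverse thetaInv thetaH := fun x => DFunLike.congr_fun hthetali x
    exact hli.injective
  -- the projection `π`
  set piS : ↥SS →* DD := (thetaH.comp L0).comp e.symm.toMonoidHom with hpiSdef
  have hpiA : ∀ n : ↥NA, piS (mA n) = Coprod.inl (fA2 n) := by
    intro n
    show thetaH (L0 (e.symm (eh (PushoutI.of (φ := phiN) true n)))) = _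
    rw [hsymm, hL0def, pushoutMap_of, hthetaHdef, PushoutI.lift_of]
  have hpiB : ∀ n : ↥NB, piS (mB n) = Coprod.inr (fB2 n) := by
    intro n
    show thetaH (L0 (e.symm (eh (PushoutI.of (φ := phiN) false n)))) = _
    rw [hsymm, hL0def, pushoutMap_of, hthetaHdef, PushoutI.lift_of]
  -- elements outside of `C`
  obtain ⟨a0, ha0⟩ : ∃ a : ↥NA, a ∉ iA.range.subgroupOf NA := by
    by_contra h
    push_neg at h
    have htop : iA.range.subgroupOf NA = ⊤ := by
      ext x
      simp [h x]
    have : iA.range.relIndex NA = 1 := by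
      show (iA.range.subgroupOf NA).index = 1
      rw [htop, Subgroup.index_top]
    omega
  obtain ⟨b0, hb0⟩ : ∃ b : ↥NB, b ∉ iB.range.subgroupOf NB := by
    by_contra h
    push_neg at h
    have htop : iB.range.subgroupOf NB = ⊤ := by
      ext x
      simp [h x]
    have : iB.range.relIndex NB = 1 := by
      show (iB.range.subgroupOf NB).index = 1
      rw [htop, Subgroup.index_top]
    omega
  have hfa0 : fA2 a0 = ofAdd 1 := homOf2_not_mem hA2 ha0
  have hfb0 : fB2 b0 = ofAdd 1 := homOf2_not_mem hB2 hb0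
  set t : ↥SS := mA a0 * mB b0 with htdef
  set sigma : ↥SS →* DihedralGroup 0 := chi.comp piS with hsigmadef
  have hsigmA : sigma (mA a0) = sr 0 := by
    show chi (piS (mA a0)) = sr 0
    rw [hpiA, hfa0]
    exact chi_aa
  have hsigmB : sigma (mB b0) = sr 1 := by
    show chi (piS (mB b0)) = sr 1
    rw [hpiB, hfb0]
    exact chi_bb
  have hsigt : sigma t = r 1 := by
    rw [htdef, map_mul, hsigmA, hsigmB, sr_mul_sr]
    exact congrArg r (by show (1:ℤ) - 0 = 1; norm_num)
  have hpisurj : Surjective piS := by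
    intro z
    induction z using Coprod.induction_on with
    | inl m =>
        rcases m2cases m with rfl | rfl
        · exact ⟨1, by rw [map_one, map_one]⟩
        · exact ⟨mA a0, by rw [hpiA, hfa0]⟩
    | inr m =>
        rcases m2cases m with rfl | rfl
        · exact ⟨1, by rw [map_one, map_one]⟩
        · exact ⟨mB b0, by rw [hpiB, hfb0]⟩
    | mul x y hx hy =>
        obtain ⟨x', rfl⟩ := hx
        obtain ⟨y', rfl⟩ := hy
        exact ⟨x' * y', map_mul _ _ _⟩
  have hsigsurj : Surjective sigma := chi_surjective.comp hpisurj
  -- the kernel of `piS` is the image of `C`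
  have hccmem : ∀ c : C, kA (iA c) ∈ SS := fun c =>
    Subgroup.mem_sup_left (Subgroup.mem_map.mpr ⟨iA c, Subgroup.le_normalizer ⟨c, rfl⟩, rfl⟩)
  set cc : C →* ↥SS := (kA.comp iA).codRestrict SS hccmem with hccdef
  have hccmA : ∀ c : C, cc c = mA (jA c) := fun c => Subtype.ext (hcoeA (jA c)).symm
  have hkerle : piS.ker ≤ cc.range := by
    intro x hx
    have hx1 : piS x = 1 := hx
    have hL0mem : L0 (e.symm x) ∈ (base psi0).range := by
      have h1 : thetaH (L0 (e.symm x)) = 1 := hx1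
      have h2 : L0 (e.symm x) = 1 := hthetaHinj (by rw [h1, map_one])
      rw [h2]
      exact one_mem _
    obtain ⟨c, hc⟩ := pushoutMap_mem_base_range phiN psi0 _ _ hcomm0 hf0 hphiNinj hpsi0inj
      (e.symm x) hL0mem
    refine ⟨c, ?_⟩
    have hx2 : x = eh (base phiN c) := by
      have h3 := congrArg e hc
      rw [MulEquiv.apply_symm_apply] at h3
      exact h3.symm
    rw [hx2, hccdef]
    apply Subtype.ext
    show kA (iA c) = ↑(eh (base phiN c))
    rw [← of_apply_eq_base phiN true c]
    exact (hPhi_ofT (jA c)).symm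
  haveI hccfin : Finite ↥cc.range := by
    apply Finite.of_surjective (fun c : C => (⟨cc c, ⟨c, rfl⟩⟩ : ↥cc.range))
    rintro ⟨y, c, rfl⟩
    exact ⟨c, rfl⟩
  haveI hMfin : Finite ↥piS.ker :=
    Finite.of_injective (Subgroup.inclusion hkerle) (Subgroup.inclusion_injective hkerle)
  -- assemble everything
  refine ⟨SS, rfl, ⟨mA, mB, hcoeA, hcoeB, ?_⟩, ?_, ⟨Subgroup.zpowers t, ?_, ?_⟩,
    ⟨piS.ker, piS.normal_ker, hMfin, ?_, ?_, piS, hpisurj, rfl⟩⟩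
  · -- universal property
    intro K _ fK gK hco
    have hcommK : ∀ b, ((famTo fK gK) b).comp (phiN b) = fK.comp jA := by
      rintro (_|_)
      · ext c
        exact (hco c).symm
      · rfl
    set F : ↥SS →* K := (PushoutI.lift (famTo fK gK) (fK.comp jA) hcommK).comp
      e.symm.toMonoidHom with hFdef
    have hFA : F.comp mA = fK := by
      ext n
      show (PushoutI.lift (famTo fK gK) (fK.comp jA) hcommK)
        (e.symm (eh (PushoutI.of (φ := phiN) true n))) = fK n
      rw [hsymm]
      exact PushoutI.lift_of _ _ _ _
    have hFB : F.comp mB = gK := by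
      ext n
      show (PushoutI.lift (famTo fK gK) (fK.comp jA) hcommK)
        (e.symm (eh (PushoutI.of (φ := phiN) false n))) = gK n
      rw [hsymm]
      exact PushoutI.lift_of _ _ _ _
    refine ⟨F, ⟨hFA, hFB⟩, ?_⟩
    intro F' ⟨hF'A, hF'B⟩
    ext s
    obtain ⟨x, rfl⟩ := hehsurj s
    induction x using PushoutI.induction_on with
    | of b g =>
        cases b
        · show F' (mB g) = F (mB g)
          exact (DFunLike.congr_fun hF'B g).trans (DFunLike.congr_fun hFB g).symm
        · show F' (mA g) = F (mA g)
          exact (DFunLike.congr_fun hF'A g).trans (DFunLike.congr_fun hFA g).symm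
    | base c =>
        rw [← of_apply_eq_base phiN true c]
        show F' (mA (jA c)) = F (mA (jA c))
        exact (DFunLike.congr_fun hF'A (jA c)).trans (DFunLike.congr_fun hFA (jA c)).symm
    | mul x y hx hy =>
        rw [map_mul, map_mul, map_mul]
        rw [hx, hy]
  · -- infinite
    exact Infinite.of_surjective sigma hsigsurj
  · -- cyclic
    constructor
    refine ⟨⟨t, Subgroup.mem_zpowers t⟩, fun x => ?_⟩
    obtain ⟨k, hk'⟩ := Subgroup.mem_zpowers_iff.mp x.2
    exact Subgroup.mem_zpowers_iff.mpr ⟨k, Subtype.ext (by rw [SubgroupClass.coe_zpow]; exact hk')⟩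
  · -- finite index
    haveI : Finite (↥SS ⧸ Subgroup.zpowers t) := by
      apply Finite.of_surjective
        (fun p : ↥piS.ker × Bool =>
          (QuotientGroup.mk (cond p.2 (mA a0) 1 * ↑p.1) : ↥SS ⧸ Subgroup.zpowers t))
      intro q
      induction q using QuotientGroup.induction_on with
      | _ z =>
        obtain ⟨n, h | h⟩ := dihedral_cases (sigma z)
        · have hmem : z * t ^ (-n) ∈ piS.ker := by
            have hs1 : sigma (z * t ^ (-n)) = 1 := by
              rw [map_mul, map_zpow, hsigt, h, ← zpow_add, add_neg_cancel, zpow_zero]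
            have : chi (piS (z * t ^ (-n))) = chi 1 := by rw [map_one]; exact hs1
            exact chi_injective this
          refine ⟨(⟨z * t ^ (-n), hmem⟩, false), ?_⟩
          show QuotientGroup.mk ((1 : ↥SS) * (z * t ^ (-n))) = QuotientGroup.mk z
          rw [QuotientGroup.eq]
          refine Subgroup.mem_zpowers_iff.mpr ⟨n, ?_⟩
          group
        · have hmem : (mA a0)⁻¹ * z * t ^ (-n) ∈ piS.ker := by
            have hs1 : sigma ((mA a0)⁻¹ * z * t ^ (-n)) = 1 := by
              rw [map_mul, map_mul, map_inv, map_zpow, hsigt, hsigmA, h]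
              have hsr : (sr 0 : DihedralGroup 0)⁻¹ = sr 0 :=
                inv_eq_of_mul_eq_one_right (sr_mul_self 0)
              rw [hsr, ← mul_assoc, sr_mul_self, one_mul, ← zpow_add,
                add_neg_cancel, zpow_zero]
            have : chi (piS ((mA a0)⁻¹ * z * t ^ (-n))) = chi 1 := by
              rw [map_one]; exact hs1
            exact chi_injective this
          refine ⟨(⟨(mA a0)⁻¹ * z * t ^ (-n), hmem⟩, true), ?_⟩
          show QuotientGroup.mk (mA a0 * ((mA a0)⁻¹ * z * t ^ (-n))) = QuotientGroup.mk z
          rw [QuotientGroup.eq]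
          refine Subgroup.mem_zpowers_iff.mpr ⟨n, ?_⟩
          group
    exact Subgroup.finiteIndex_of_finite_quotient
  · -- maximality
    intro D hDn hDf
    have hDmapfin : Finite ↥(D.map sigma) := by
      have hfin : ((D : Set ↥SS).image sigma).Finite := by
        haveI := hDf
        exact Set.Finite.image _ (Set.toFinite _)
      have : (↑(D.map sigma) : Set (DihedralGroup 0)) = (D : Set ↥SS).image sigma := by
        rw [Subgroup.coe_map]
      rw [← this] at hfin
      exact hfin.to_subtype
    have hbot := dihedral_norm_fin (D.map sigma) (hDn.map sigma hsigsurj) hDmapfin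
    intro x hx
    have hsx : sigma x = 1 := by
      have : sigma x ∈ D.map sigma := Subgroup.mem_map.mpr ⟨x, hx, rfl⟩
      rw [hbot] at this
      exact this
    show piS x = 1
    apply chi_injective
    rw [map_one]
    exact hsx
  · -- contains the image of C
    intro x hx
    obtain ⟨a, ⟨c, rfl⟩, ha⟩ := Subgroup.mem_comap.mp hx
    have hxc : x = cc c := Subtype.ext ha.symm
    rw [hxc, hccmA]
    show piS (mA (jA c)) = 1
    rw [hpiA]
    have : fA2 (jA c) = 1 := homOf2_mem hA2 (Subgroup.mem_subgroupOf.mpr ⟨c, rfl⟩)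
    rw [this, map_one]
end
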